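/- Let D be a measurable subset of ℝ^d, let 𝓔 be a collection of admissible subsets of D, let E ∈ 𝓔 be fixed, let s ∈ (0,1/2], and let c, C > 0. Suppose that for every measurable f : D → [0,∞) taking only values in ℕ ∪ {0}, satisfying J(f,E',s) ≤ 1/2 for all E' ∈ 𝓔 and λ({x ∈ E : f(x) > 0}) ≤ (1/2)·λ(E), and for every α ≥ 0 and every real M > 0 with J(f,E',s) ≤ M for all E' ∈ 𝓔, one has λ({x ∈ E : f(x) > α}) ≤ C·λ(E)·exp(−c·α/M). Then for every measurable f : D → [0,∞) with λ({x ∈ E : f(x) > 0}) ≤ (1/2)·λ(E), every α ≥ 0, and every real M > 0 with J(f,E',s) ≤ M for all E' ∈ 𝓔, one has λ({x ∈ E : f(x) > α}) ≤ max{C, e^c}·λ(E)·exp(−(c/4)·α/M). -/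

import Mathlib

/-!
Rounding `f` down to multiples of `2b`, with `b = 4M/3` slightly above the bound `M` on
`J(f, ·, s)`, gives an integer-valued `g = ⌊f / 2b⌋`: on each `E'` where `f` stays within `b`
of a center `c`, `g` takes at most the two values `k, k + 1`, so `J(g, E', s) ≤ 1/2`. The
assumed estimate for integer-valued functions applied to `g` at level `α / 2b - 1` gives the
bound once `α > 4M`; for `α ≤ 4M` the right-hand side is already at least `λ(E)`.
-/

open MeasureTheory Set

/-- The John–Strömberg functional
`J(f,E,s) = inf_{c ∈ ℝ} inf {α ≥ 0 : μ({x ∈ E : |f(x) − c| > α}) < s·μ(E)}`. -/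
noncomputable def JS {X : Type*} [MeasurableSpace X] (μ : Measure X)
    (f : X → ℝ) (E : Set X) (s : ℝ) : ℝ :=
  sInf {α : ℝ | 0 ≤ α ∧ ∃ c : ℝ, μ {x ∈ E | α < |f x - c|} < ENNReal.ofReal s * μ E}

/-- An admissible set: measurable with positive finite measure. -/
def Admissible {X : Type*} [MeasurableSpace X] (μ : Measure X) (E : Set X) : Prop :=
  MeasurableSet E ∧ 0 < μ E ∧ μ E < ⊤

open Filter Topology

section Floor

variable {X : Type*} {f : X → ℝ} {E : Set X}

lemma setOf_floor_div_pos_subset {r : ℝ} (hr : 0 < r) :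
    {x ∈ E | 0 < (⌊f x / r⌋ : ℝ)} ⊆ {x ∈ E | 0 < f x} := fun _ hx =>
  ⟨hx.1, (div_pos_iff_of_pos_right hr).1 <|
    zero_lt_one.trans_le (Int.floor_pos.1 (Int.cast_pos.1 hx.2))⟩

lemma setOf_lt_subset_setOf_lt_floor_div {r α : ℝ} (hr : 0 < r) :
    {x ∈ E | α < f x} ⊆ {x ∈ E | α / r - 1 < (⌊f x / r⌋ : ℝ)} := fun _ hx =>
  ⟨hx.1, (sub_lt_sub_right (div_lt_div_of_pos_right hx.2 hr) 1).trans (Int.sub_one_lt_floor _)⟩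

lemma abs_floor_sub_floor_add_half_le {t u : ℝ} (hut : u ≤ t) (htu : t ≤ u + 1) :
    |(⌊t⌋ : ℝ) - (⌊u⌋ + 1 / 2)| ≤ 1 / 2 := by
  have h₁ : (⌊u⌋ : ℝ) ≤ ⌊t⌋ := by exact_mod_cast Int.floor_le_floor hut
  have h₂ : (⌊t⌋ : ℝ) ≤ ⌊u⌋ + 1 := by
    exact_mod_cast (Int.floor_le_floor htu).trans_eq (Int.floor_add_one u)
  rw [abs_le]
  constructor <;> linarith

end Floor

section JohnStromberg

variable {X : Type*} [MeasurableSpace X] {μ : Measure X} {f : X → ℝ} {E : Set X} {s : ℝ}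

lemma JS_le {a c : ℝ} (ha : 0 ≤ a)
    (h : μ {x ∈ E | a < |f x - c|} < ENNReal.ofReal s * μ E) : JS μ f E s ≤ a :=
  csInf_le ⟨0, fun _ hy => hy.1⟩ ⟨ha, c, h⟩

lemma tendsto_measure_setOf_natCast_lt_abs (hf : Measurable f) (hE : MeasurableSet E)
    (hμE : μ E ≠ ⊤) : Tendsto (fun n : ℕ => μ {x ∈ E | (n : ℝ) < |f x|}) atTop (𝓝 0) := by
  have hinter : (⋂ n : ℕ, {x ∈ E | (n : ℝ) < |f x|}) = ∅ := by
    refine eq_empty_of_forall_notMem fun x hx => ?_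
    obtain ⟨n, hn⟩ := exists_nat_gt |f x|
    exact (mem_iInter.1 hx n).2.not_gt hn
  have := tendsto_measure_iInter_atTop (μ := μ) (s := fun n : ℕ => {x ∈ E | (n : ℝ) < |f x|})
    (fun n => (hE.inter (measurableSet_lt measurable_const hf.abs)).nullMeasurableSet)
    (fun m n hmn x hx => ⟨hx.1, (Nat.cast_le.2 hmn).trans_lt hx.2⟩)
    ⟨0, ne_top_of_le_ne_top hμE (measure_mono fun _ hx => hx.1)⟩
  rwa [hinter, measure_empty] at this

/-- Without `0 < s` and `0 < μ E < ∞` the set defining `JS` may be empty, with infimum `0`. -/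
lemma exists_measure_lt_of_JS_lt (hf : Measurable f) (hE : Admissible μ E) (hs : 0 < s)
    {b : ℝ} (hb : JS μ f E s < b) :
    ∃ c, μ {x ∈ E | b < |f x - c|} < ENNReal.ofReal s * μ E := by
  obtain ⟨hEm, hE0, hEfin⟩ := hE
  have hne : {a : ℝ | 0 ≤ a ∧ ∃ c : ℝ,
      μ {x ∈ E | a < |f x - c|} < ENNReal.ofReal s * μ E}.Nonempty := by
    have hpos : 0 < ENNReal.ofReal s * μ E :=
      ENNReal.mul_pos (ENNReal.ofReal_pos.2 hs).ne' hE0.ne'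
    obtain ⟨n, hn⟩ :=
      ((tendsto_measure_setOf_natCast_lt_abs hf hEm hEfin.ne).eventually_lt_const hpos).exists
    exact ⟨(n : ℝ), n.cast_nonneg, 0, by simpa using hn⟩
  obtain ⟨a, ⟨-, c, hc⟩, hab⟩ := (csInf_lt_iff (by exact ⟨0, fun _ hy => hy.1⟩) hne).1 hb
  exact ⟨c, hc.trans_le' <| measure_mono fun x hx => ⟨hx.1, hab.trans hx.2⟩⟩

lemma JS_floor_div_le_half {b c : ℝ} (hb : 0 < b)
    (hc : μ {x ∈ E | b < |f x - c|} < ENNReal.ofReal s * μ E) :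
    JS μ (fun x => (⌊f x / (2 * b)⌋ : ℝ)) E s ≤ 1 / 2 := by
  refine JS_le (c := ⌊(c - b) / (2 * b)⌋ + 1 / 2) (by norm_num) ((measure_mono ?_).trans_lt hc)
  rintro x ⟨hxE, hx⟩
  refine ⟨hxE, not_le.1 fun hle => hx.not_ge (abs_floor_sub_floor_add_half_le ?_ ?_)⟩
  all_goals obtain ⟨hl, hr⟩ := abs_le.1 hle
  · gcongr
    linarith
  · rw [div_add_one (by positivity)]
    gcongr
    linarith

end JohnStromberg

lemma one_le_max_mul_exp {c C M α : ℝ} (hc : 0 ≤ c) (hM : 0 < M) (hα : α ≤ 4 * M) :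
    1 ≤ max C (Real.exp c) * Real.exp (-((c / 4) * α) / M) := by
  have hexp : -c ≤ -((c / 4) * α) / M := by
    rw [neg_div, neg_le_neg_iff, div_le_iff₀ hM]
    nlinarith
  calc 1 = Real.exp c * Real.exp (-c) := by rw [← Real.exp_add, add_neg_cancel, Real.exp_zero]
    _ ≤ max C (Real.exp c) * Real.exp (-((c / 4) * α) / M) :=
      mul_le_mul (le_max_right _ _) (Real.exp_le_exp.2 hexp) (Real.exp_pos _).le
        ((Real.exp_pos c).le.trans (le_max_right _ _))

lemma mul_exp_le_max_mul_exp {c C M α : ℝ} (hc : 0 ≤ c) (hC : 0 ≤ C) (hM : 0 < M)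
    (hα : 4 * M ≤ α) :
    C * Real.exp (-(c * (α / (2 * (4 * M / 3)) - 1)) / (1 / 2)) ≤
      max C (Real.exp c) * Real.exp (-((c / 4) * α) / M) := by
  have hsplit : -(c * (α / (2 * (4 * M / 3)) - 1)) / (1 / 2) =
      (2 * c - c * α / M / 2) + -((c / 4) * α) / M := by
    field_simp
    ring
  have hneg : 2 * c - c * α / M / 2 ≤ 0 := by
    have : 4 * c ≤ c * α / M := (le_div_iff₀ hM).2 (by nlinarith)
    linarith
  rw [hsplit, Real.exp_add, ← mul_assoc]
  gcongr
  calc C * Real.exp (2 * c - c * α / M / 2) ≤ C * 1 := by gcongr; exact Real.exp_le_one_iff.2 hneg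
    _ ≤ max C (Real.exp c) := (mul_one C).trans_le (le_max_left _ _)

theorem stmt9 {d : ℕ} (D : Set (Fin d → ℝ))
    (𝓔 : Set (Set (Fin d → ℝ))) (h𝓔 : ∀ E ∈ 𝓔, Admissible volume E ∧ E ⊆ D)
    (E : Set (Fin d → ℝ))
    (s : ℝ) (hs : s ∈ Set.Ioc (0:ℝ) (1/2))
    (c C : ℝ) (hc : 0 < c) (hC : 0 < C)
    (hyp : ∀ f : (Fin d → ℝ) → ℝ, Measurable f →
      (∀ x ∈ D, 0 ≤ f x) → (∀ x ∈ D, ∃ n : ℕ, f x = n) →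
      (∀ E' ∈ 𝓔, JS volume f E' s ≤ 1/2) →
      volume {x ∈ E | 0 < f x} ≤ volume E / 2 →
      ∀ α : ℝ, 0 ≤ α → ∀ M : ℝ, 0 < M → (∀ E' ∈ 𝓔, JS volume f E' s ≤ M) →
        volume {x ∈ E | α < f x} ≤
          ENNReal.ofReal (C * Real.exp (-(c * α) / M)) * volume E) :
    ∀ f : (Fin d → ℝ) → ℝ, Measurable f → (∀ x ∈ D, 0 ≤ f x) →
      volume {x ∈ E | 0 < f x} ≤ volume E / 2 →
      ∀ α : ℝ, 0 ≤ α → ∀ M : ℝ, 0 < M → (∀ E' ∈ 𝓔, JS volume f E' s ≤ M) →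
        volume {x ∈ E | α < f x} ≤
          ENNReal.ofReal (max C (Real.exp c) * Real.exp (-((c / 4) * α) / M)) *
            volume E := by
  intro f hf hf0 hpos α _ M hM hJS
  rcases le_or_gt α (4 * M) with hsmall | hlarge
  · refine (measure_mono fun _ hx => hx.1).trans (le_mul_of_one_le_left' ?_)
    exact ENNReal.one_le_ofReal.2 (one_le_max_mul_exp hc.le hM hsmall)
  set b := 4 * M / 3 with hb_def
  have hb : 0 < b := by positivity
  set g : (Fin d → ℝ) → ℝ := fun x => (⌊f x / (2 * b)⌋ : ℝ)
  have hgℕ : ∀ x ∈ D, ∃ n : ℕ, g x = n := fun x hx =>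
    ⟨⌊f x / (2 * b)⌋₊, by
      simp only [g]
      exact_mod_cast (Int.natCast_floor_eq_floor (div_nonneg (hf0 x hx) (by positivity))).symm⟩
  have hJSg : ∀ E' ∈ 𝓔, JS volume g E' s ≤ 1 / 2 := fun E' hE' =>
    have ⟨_, hc'⟩ := exists_measure_lt_of_JS_lt hf (h𝓔 E' hE').1 hs.1
      ((hJS E' hE').trans_lt (by rw [hb_def]; linarith))
    JS_floor_div_le_half hb hc'
  have hβ : 0 ≤ α / (2 * b) - 1 := by
    rw [sub_nonneg, one_le_div (by positivity), hb_def]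
    linarith
  calc volume {x ∈ E | α < f x} ≤ volume {x ∈ E | α / (2 * b) - 1 < g x} :=
        measure_mono (setOf_lt_subset_setOf_lt_floor_div (by positivity))
    _ ≤ ENNReal.ofReal (C * Real.exp (-(c * (α / (2 * b) - 1)) / (1 / 2))) * volume E :=
        hyp g (measurable_from_top.comp (hf.div_const _).floor)
          (fun x hx => (hgℕ x hx).elim fun n hn => hn ▸ n.cast_nonneg) hgℕ hJSg
          ((measure_mono (setOf_floor_div_pos_subset (by positivity))).trans hpos)
          _ hβ _ one_half_pos hJSg
    _ ≤ _ := mul_le_mul_left (ENNReal.ofReal_le_ofReal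
        (mul_exp_le_max_mul_exp hc.le hC.le hM hlarge.le)) _
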